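/- Let U_n, U:(0,∞)→ℝ be utility functions (strictly increasing, strictly concave, continuously differentiable, satisfying the Inada conditions) such that U_n→U pointwise on (0,∞). Then the conjugate functions converge pointwise: V_n(y)→V(y) for every y∈(0,∞), where V_n(y)=sup_{x>0}(U_n(x)−xy) and V(y)=sup_{x>0}(U(x)−xy). -/

import Mathlib

/-!
The lower bound is immediate: `Vₙ(y) ≥ Uₙ(x) - xy → U(x) - xy` for each fixed `x`. For the
upper bound, `Uₙ(x) - xy` is controlled uniformly in `x` by finitely many values of `Uₙ`:
near `0` by monotonicity, beyond some point `B` by a secant slope of `Uₙ` that is eventually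
below `y` (the slopes of `U` far out are below `y` by the Inada condition at `∞`), and on
`[a, B]` by the values on a finite grid together with the concavity bound
`Uₙ(x) - Uₙ(p) ≤ K (x - p)` for `a ≤ p ≤ x`, where `K` bounds a secant slope of `Uₙ` left of
`a`. All these finitely many quantities converge, so eventually `Uₙ(x) - xy ≤ V(y) + ε`
for every `x > 0`.
-/

open MeasureTheory Set Filter
open scoped ENNReal Topology

noncomputable section

namespace TC

variable {Ω : Type*} {m0 : MeasurableSpace Ω}

/-- A càdlàg real path: right-continuous with left limits. -/
def Cadlag (f : ℝ → ℝ) : Prop :=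
  (∀ t : ℝ, ContinuousWithinAt f (Ici t) t) ∧
    ∀ t : ℝ, ∃ L : ℝ, Tendsto f (𝓝[<] t) (𝓝 L)

/-- A làdlàg real path: right limits and left limits exist everywhere. -/
def Ladlag (f : ℝ → ℝ) : Prop :=
  (∀ t : ℝ, ∃ L : ℝ, Tendsto f (𝓝[>] t) (𝓝 L)) ∧
    ∀ t : ℝ, ∃ L : ℝ, Tendsto f (𝓝[<] t) (𝓝 L)

/-- Usual conditions for a filtration: right-continuity and completeness
(the time-0 σ-algebra contains all `μ`-null sets). -/
def UsualConditions (ℱ : Filtration ℝ m0) (μ : Measure Ω) : Prop :=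
  (∀ t : ℝ, (ℱ t : MeasurableSpace Ω) = ⨅ s ∈ Ioi t, (ℱ s : MeasurableSpace Ω)) ∧
    ∀ N : Set Ω, μ N = 0 → MeasurableSet[ℱ 0] N

/-- A `[0,T]`-valued stopping time. -/
def IsStoppingTimeIcc (ℱ : Filtration ℝ m0) (T : ℝ) (τ : Ω → ℝ) : Prop :=
  IsStoppingTime ℱ (fun ω => (τ ω : WithTop ℝ)) ∧ ∀ ω, τ ω ∈ Icc (0 : ℝ) T

/-- A martingale on the time interval `[0,T]`. -/
structure MartingaleOn (ℱ : Filtration ℝ m0) (μ : Measure Ω) (T : ℝ)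
    (X : ℝ → Ω → ℝ) : Prop where
  adapted : ∀ t ∈ Icc (0 : ℝ) T, StronglyMeasurable[ℱ t] (X t)
  integrable : ∀ t ∈ Icc (0 : ℝ) T, Integrable (X t) μ
  condexp_eq : ∀ s t : ℝ, s ∈ Icc (0 : ℝ) T → t ∈ Icc (0 : ℝ) T → s ≤ t →
    μ[X t | ℱ s] =ᵐ[μ] X s

/-- The process `X` stopped at the random time `τ`. -/
def stopped (X : ℝ → Ω → ℝ) (τ : Ω → ℝ) : ℝ → Ω → ℝ := fun t ω => X (min t (τ ω)) ω

/-- A local martingale on `[0,T]`: there is a localizing sequence of stopping times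
increasing to infinity reducing `X` to a martingale on `[0,T]`. -/
def IsLocalMartingaleOn (ℱ : Filtration ℝ m0) (μ : Measure Ω) (T : ℝ)
    (X : ℝ → Ω → ℝ) : Prop :=
  ∃ τ : ℕ → Ω → ℝ,
    (∀ n, IsStoppingTime ℱ (fun ω => (τ n ω : WithTop ℝ))) ∧ (∀ n ω, 0 ≤ τ n ω) ∧
    (∀ n ω, τ n ω ≤ τ (n + 1) ω) ∧
    (∀ ω, ∀ M : ℝ, ∃ N, ∀ n ≥ N, M ≤ τ n ω) ∧
    ∀ n, MartingaleOn ℱ μ T (stopped X (τ n))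

/-- An optional strong supermartingale on `[0,T]`: evaluated at any `[0,T]`-valued stopping
time it is measurable for the stopping-time σ-algebra and integrable, and the strong
supermartingale inequality holds for all pairs of ordered stopping times. -/
structure IsOptionalStrongSupermartingale (ℱ : Filtration ℝ m0) (μ : Measure Ω) (T : ℝ)
    (X : ℝ → Ω → ℝ) : Prop where
  stronglyMeasurable : ∀ ⦃τ : Ω → ℝ⦄ (hτ : IsStoppingTimeIcc ℱ T τ),
    StronglyMeasurable[hτ.1.measurableSpace] fun ω => X (τ ω) ω
  integrable : ∀ ⦃τ : Ω → ℝ⦄, IsStoppingTimeIcc ℱ T τ →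
    Integrable (fun ω => X (τ ω) ω) μ
  supermartingale : ∀ ⦃σ τ : Ω → ℝ⦄ (hσ : IsStoppingTimeIcc ℱ T σ),
    IsStoppingTimeIcc ℱ T τ → (∀ ω, σ ω ≤ τ ω) →
    μ[fun ω => X (τ ω) ω | hσ.1.measurableSpace] ≤ᵐ[μ] fun ω => X (σ ω) ω

/-- The liquidation value of the position `φ = (φ⁰, φ¹)` at time `t` under
proportional transaction costs `c`. -/
def liqValue (S : ℝ → Ω → ℝ) (c : ℝ) (φ : (ℝ → Ω → ℝ) × (ℝ → Ω → ℝ)) (t : ℝ) (ω : Ω) : ℝ :=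
  φ.1 t ω + (1 - c) * max (φ.2 t ω) 0 * S t ω - max (-(φ.2 t ω)) 0 * S t ω

/-- A self-financing trading strategy under transaction costs `c`: an adapted,
finite-variation (làdlàg) pair `(φ⁰, φ¹)` such that, writing `φ¹ = up - down` as a
difference of nondecreasing processes, the increments of `φ⁰` are dominated by the
Lebesgue--Stieltjes integrals `-∫ S d(up) + (1-c) ∫ S d(down)`. -/
def SelfFinancing (ℱ : Filtration ℝ m0) (T : ℝ) (S : ℝ → Ω → ℝ) (c : ℝ)
    (φ : (ℝ → Ω → ℝ) × (ℝ → Ω → ℝ)) : Prop :=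
  Adapted ℱ φ.1 ∧ Adapted ℱ φ.2 ∧
  (∀ ω, Ladlag fun t => φ.1 t ω) ∧ (∀ ω, Ladlag fun t => φ.2 t ω) ∧
  ∃ (up down : Ω → ℝ → ℝ) (hup : ∀ ω, Monotone (up ω)) (hdown : ∀ ω, Monotone (down ω)),
    (∀ ω t, φ.2 t ω = up ω t - down ω t) ∧
    ∀ ω, ∀ s t : ℝ, 0 ≤ s → s < t → t ≤ T →
      φ.1 t ω - φ.1 s ω ≤
        -(∫ u in Ioc s t, S u ω ∂((hup ω).stieltjesFunction.measure)) +
          (1 - c) * ∫ u in Ioc s t, S u ω ∂((hdown ω).stieltjesFunction.measure)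

/-- Admissibility: the liquidation value stays nonnegative on `[0,T]`. -/
def Admissible (T : ℝ) (S : ℝ → Ω → ℝ) (c : ℝ)
    (φ : (ℝ → Ω → ℝ) × (ℝ → Ω → ℝ)) : Prop :=
  ∀ t ∈ Icc (0 : ℝ) T, ∀ ω, 0 ≤ liqValue S c φ t ω

/-- The set `A(x)` of admissible self-financing strategies starting from `(x, 0)`. -/
def A (ℱ : Filtration ℝ m0) (T : ℝ) (S : ℝ → Ω → ℝ) (c : ℝ) (x : ℝ) :
    Set ((ℝ → Ω → ℝ) × (ℝ → Ω → ℝ)) :=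
  {φ | SelfFinancing ℱ T S c φ ∧ Admissible T S c φ ∧ ∀ ω, φ.1 0 ω = x ∧ φ.2 0 ω = 0}

/-- The set `C(x)` of attainable terminal liquidation values from initial wealth `x`. -/
def C (ℱ : Filtration ℝ m0) (T : ℝ) (S : ℝ → Ω → ℝ) (c : ℝ) (x : ℝ) : Set (Ω → ℝ) :=
  {g | ∃ φ ∈ A ℱ T S c x, g = fun ω => liqValue S c φ T ω}

/-- The set `B(y)` of optional strong supermartingale deflators under the measure `μ`. -/
def B (ℱ : Filtration ℝ m0) (μ : Measure Ω) (T : ℝ) (S : ℝ → Ω → ℝ) (c : ℝ) (y : ℝ) :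
    Set ((ℝ → Ω → ℝ) × (ℝ → Ω → ℝ)) :=
  {Y | IsOptionalStrongSupermartingale ℱ μ T Y.1 ∧
    IsOptionalStrongSupermartingale ℱ μ T Y.2 ∧
    (∀ t ω, 0 ≤ Y.1 t ω) ∧ (∀ t ω, 0 ≤ Y.2 t ω) ∧ (∀ ω, Y.1 0 ω = y) ∧
    (∃ St : ℝ → Ω → ℝ,
      (∀ t ∈ Icc (0 : ℝ) T, ∀ ω, St t ω ∈ Icc ((1 - c) * S t ω) (S t ω)) ∧
      ∀ t ω, Y.2 t ω = Y.1 t ω * St t ω) ∧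
    ∀ φ ∈ A ℱ T S c 1,
      IsOptionalStrongSupermartingale ℱ μ T
        (fun t ω => φ.1 t ω * Y.1 t ω + φ.2 t ω * Y.2 t ω) ∧
      ∀ t ∈ Icc (0 : ℝ) T, ∀ ω, 0 ≤ φ.1 t ω * Y.1 t ω + φ.2 t ω * Y.2 t ω}

/-- The set `D(y)` of terminal values of deflators in `B(y)`. -/
def D (ℱ : Filtration ℝ m0) (μ : Measure Ω) (T : ℝ) (S : ℝ → Ω → ℝ) (c : ℝ) (y : ℝ) :
    Set (Ω → ℝ) :=
  {h | ∃ Y ∈ B ℱ μ T S c y, h = Y.1 T}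

/-- A `c`-consistent price system under the measure `μ` for the price `S`. -/
def IsCPS (ℱ : Filtration ℝ m0) (μ : Measure Ω) (T : ℝ) (S : ℝ → Ω → ℝ) (c : ℝ)
    (Z : (ℝ → Ω → ℝ) × (ℝ → Ω → ℝ)) : Prop :=
  (∀ t ∈ Icc (0 : ℝ) T, ∀ ω, 0 < Z.1 t ω) ∧ (∀ t ∈ Icc (0 : ℝ) T, ∀ ω, 0 < Z.2 t ω) ∧
  (∀ ω, Z.1 0 ω = 1) ∧ MartingaleOn ℱ μ T Z.1 ∧ IsLocalMartingaleOn ℱ μ T Z.2 ∧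
  ∀ t ∈ Icc (0 : ℝ) T, ∀ ω, Z.2 t ω / Z.1 t ω ∈ Icc ((1 - c) * S t ω) (S t ω)

/-- The set `Z^{loc,c}(μ)` of local `c`-consistent price systems under `μ`. -/
def Zloc (ℱ : Filtration ℝ m0) (μ : Measure Ω) (T : ℝ) (S : ℝ → Ω → ℝ) (c : ℝ) :
    Set ((ℝ → Ω → ℝ) × (ℝ → Ω → ℝ)) :=
  {Z | (∀ t ∈ Icc (0 : ℝ) T, ∀ ω, 0 < Z.1 t ω ∧ 0 < Z.2 t ω) ∧ (∀ ω, Z.1 0 ω = 1) ∧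
    ∃ τ : ℕ → Ω → ℝ,
      (∀ n, IsStoppingTime ℱ (fun ω => (τ n ω : WithTop ℝ))) ∧ (∀ n ω, 0 ≤ τ n ω) ∧
      (∀ n ω, τ n ω ≤ τ (n + 1) ω) ∧
      (∀ ω, ∀ M : ℝ, ∃ N, ∀ n ≥ N, M ≤ τ n ω) ∧
      ∀ n, IsCPS ℱ μ T (stopped S (τ n)) c (stopped Z.1 (τ n), stopped Z.2 (τ n))}

/-- A utility function on `(0,∞)`: strictly increasing, strictly concave, continuously
differentiable, satisfying the Inada conditions. -/
structure IsUtility (U : ℝ → ℝ) : Prop where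
  strictMono : StrictMonoOn U (Ioi 0)
  strictConcave : StrictConcaveOn ℝ (Ioi 0) U
  differentiable : ∀ x ∈ Ioi (0 : ℝ), DifferentiableAt ℝ U x
  contDeriv : ContinuousOn (deriv U) (Ioi 0)
  inada_zero : Tendsto (deriv U) (𝓝[>] 0) atTop
  inada_top : Tendsto (deriv U) atTop (𝓝 0)

/-- Reasonable asymptotic elasticity: `limsup_{x→∞} x U'(x)/U(x) < 1`. -/
def ReasonableAE (U : ℝ → ℝ) : Prop :=
  limsup (fun x => x * deriv U x / U x) atTop < 1

/-- The Legendre--Fenchel conjugate `V(y) = sup_{x>0} (U(x) - x y)`. -/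
def conjFn (U : ℝ → ℝ) (y : ℝ) : ℝ := ⨆ x : Ioi (0 : ℝ), (U x.1 - x.1 * y)

/-- The primal value function `u(x) = sup_{g ∈ C(x)} E_μ[U(g)]`. -/
def primalValue (ℱ : Filtration ℝ m0) (μ : Measure Ω) (T : ℝ) (S : ℝ → Ω → ℝ) (c : ℝ)
    (U : ℝ → ℝ) (x : ℝ) : ℝ :=
  sSup ((fun g => ∫ ω, U (g ω) ∂μ) '' C ℱ T S c x)

/-- The dual value function `v(y) = inf_{h ∈ D(y)} E_μ[V(h)]`. -/
def dualValue (ℱ : Filtration ℝ m0) (μ : Measure Ω) (T : ℝ) (S : ℝ → Ω → ℝ) (c : ℝ)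
    (V : ℝ → ℝ) (y : ℝ) : ℝ :=
  sInf ((fun h => ∫ ω, V (h ω) ∂μ) '' D ℱ μ T S c y)

/-- The standing assumptions of the duality theorem. -/
structure StandingAssumptions (ℱ : Filtration ℝ m0) (μ : Measure Ω) (T : ℝ)
    (S : ℝ → Ω → ℝ) (c : ℝ) (U : ℝ → ℝ) : Prop where
  hT : 0 < T
  hc : c ∈ Ioo (0 : ℝ) 1
  usual : UsualConditions ℱ μ
  S_adapted : Adapted ℱ S
  S_pos : ∀ t ω, 0 < S t ω
  S_cadlag : ∀ ω, Cadlag fun t => S t ω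
  hU : IsUtility U
  hRAE : ReasonableAE U
  finiteValue : ∃ x > 0, BddAbove ((fun g => ∫ ω, U (g ω) ∂μ) '' C ℱ T S c x)
  cps : ∀ m : ℝ, 0 < m → m < c → (Zloc ℱ μ T S m).Nonempty

/-- A Doob--Meyer--Mertens decomposition `X = M - A` on `[0,T]`: `M` a càdlàg local
martingale, `A` a nondecreasing làdlàg adapted (predictable) process starting at `0`. -/
structure IsDMMDecomposition (ℱ : Filtration ℝ m0) (μ : Measure Ω) (T : ℝ)
    (X M A : ℝ → Ω → ℝ) : Prop where
  decomp : ∀ t ∈ Icc (0 : ℝ) T, ∀ ω, X t ω = M t ω - A t ω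
  localMart : IsLocalMartingaleOn ℱ μ T M
  M_cadlag : ∀ ω, Cadlag fun t => M t ω
  A_adapted : Adapted ℱ A
  A_mono : ∀ ω, MonotoneOn (fun t => A t ω) (Icc 0 T)
  A_zero : ∀ ω, A 0 ω = 0
  A_ladlag : ∀ ω, Ladlag fun t => A t ω

/-- The first time after `σ` at which `S` hits `(1+ε) S_σ` or `(1-ε) S_σ`, capped at `T`. -/
def hittingTimeEps (S : ℝ → Ω → ℝ) (T : ℝ) (σ : Ω → ℝ) (ε : ℝ) (ω : Ω) : ℝ :=
  sInf ({t : ℝ | σ ω ≤ t ∧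
    (S t ω = (1 + ε) * S (σ ω) ω ∨ S t ω = (1 - ε) * S (σ ω) ω)} ∪ {T})

end TC

namespace ConcaveOn

variable {s : Set ℝ} {f : ℝ → ℝ} {p q x x₁ x₂ y : ℝ}

theorem slope_le_slope_of_le (hf : ConcaveOn ℝ s f) (hp : p ∈ s) (hx₂ : x₂ ∈ s)
    (hpq : p < q) (hqx : q ≤ x₁) (hx : x₁ < x₂) : slope f x₁ x₂ ≤ slope f p q := by
  have hmem : Icc p x₂ ⊆ s := hf.1.ordConnected.out hp hx₂
  have hq : q ∈ s := hmem ⟨hpq.le, hqx.trans hx.le⟩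
  have hx₁ : x₁ ∈ s := hmem ⟨hpq.le.trans hqx, hx.le⟩
  calc slope f x₁ x₂ ≤ slope f x₁ p :=
        hf.slope_anti hx₁ ⟨hp, (hpq.trans_le hqx).ne⟩ ⟨hx₂, hx.ne'⟩
          ((hpq.trans_le hqx).le.trans hx.le)
    _ = slope f p x₁ := slope_comm f x₁ p
    _ ≤ slope f p q := hf.slope_anti hp ⟨hq, hpq.ne'⟩ ⟨hx₁, (hpq.trans_le hqx).ne'⟩ hqx

theorem sub_le_slope_mul (hf : ConcaveOn ℝ s f) (hp : p ∈ s) (hx₂ : x₂ ∈ s)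
    (hpq : p < q) (hqx : q ≤ x₁) (hx : x₁ ≤ x₂) : f x₂ - f x₁ ≤ slope f p q * (x₂ - x₁) := by
  rcases hx.eq_or_lt with rfl | hlt
  · simp
  have := hf.slope_le_slope_of_le hp hx₂ hpq hqx hlt
  rwa [slope_def_field, div_le_iff₀ (sub_pos.2 hlt)] at this

theorem sub_mul_le_of_slope_le (hf : ConcaveOn ℝ s f) (hp : p ∈ s) (hx : x ∈ s)
    (hpq : p < q) (hqx : q ≤ x) (hslope : slope f p q ≤ y) : f x - x * y ≤ f q - q * y := by
  have := hf.sub_le_slope_mul hp hx hpq le_rfl hqx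
  nlinarith [mul_le_mul_of_nonneg_right hslope (sub_nonneg.2 hqx)]

end ConcaveOn

theorem Filter.Tendsto.slope {ι : Type*} {l : Filter ι} {F : ι → ℝ → ℝ} {f : ℝ → ℝ} {a b : ℝ}
    (ha : Tendsto (F · a) l (𝓝 (f a))) (hb : Tendsto (F · b) l (𝓝 (f b))) :
    Tendsto (fun n => slope (F n) a b) l (𝓝 (slope f a b)) := by
  simp only [slope_def_field]
  exact (hb.sub ha).div_const _

theorem exists_nat_le_lt_add_of_lt {a δ x : ℝ} {m : ℕ} (hδ : 0 < δ) (hax : a ≤ x)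
    (hx : x < a + (m + 1 : ℕ) * δ) : ∃ i ≤ m, a + i * δ ≤ x ∧ x < a + i * δ + δ := by
  have hxa : 0 ≤ (x - a) / δ := div_nonneg (sub_nonneg.2 hax) hδ.le
  refine ⟨⌊(x - a) / δ⌋₊, Nat.lt_succ_iff.1 ((Nat.floor_lt hxa).2 ?_), ?_, ?_⟩
  · rw [div_lt_iff₀ hδ]; linarith
  · have := (le_div_iff₀ hδ).1 (Nat.floor_le hxa); linarith
  · have := (div_lt_iff₀ hδ).1 (Nat.lt_floor_add_one ((x - a) / δ)); linarith

namespace TC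

variable {W : ℝ → ℝ} {y C : ℝ}

theorem conjFn_le (h : ∀ x > 0, W x - x * y ≤ C) : conjFn W y ≤ C :=
  ciSup_le fun x => h x x.2

theorem bddAbove_range_sub_mul (h : ∀ x > 0, W x - x * y ≤ C) :
    BddAbove (range fun x : Ioi (0 : ℝ) => W x - x * y) :=
  ⟨C, forall_mem_range.2 fun x => h x x.2⟩

theorem IsUtility.eventually_slope_lt (hW : IsUtility W) (hy : 0 < y) :
    ∀ᶠ p in atTop, 0 < p ∧ ∀ q > p, slope W p q < y := by
  filter_upwards [hW.inada_top.eventually_lt_const hy, eventually_gt_atTop 0] with p hp hp0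
  exact ⟨hp0, fun q hq => (hW.strictConcave.concaveOn.slope_le_deriv hp0 (hp0.trans hq) hq
    (hW.differentiable p hp0)).trans_lt hp⟩

theorem IsUtility.bddAbove_range_sub_mul (hW : IsUtility W) (hy : 0 < y) :
    BddAbove (range fun x : Ioi (0 : ℝ) => W x - x * y) := by
  obtain ⟨p, hp0, hp⟩ := (hW.eventually_slope_lt hy).exists
  have hq : (0 : ℝ) < p + 1 := by linarith
  refine TC.bddAbove_range_sub_mul (C := W (p + 1)) fun x hx => ?_
  rcases le_or_gt x (p + 1) with hxq | hqx
  · nlinarith [hW.strictMono.monotoneOn hx hq hxq]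
  · nlinarith [hW.strictConcave.concaveOn.sub_mul_le_of_slope_le hp0 hx (lt_add_one p) hqx.le
      (hp _ (lt_add_one p)).le]

theorem sub_mul_le_of_grid (hmono : MonotoneOn W (Ioi 0)) (hconc : ConcaveOn ℝ (Ioi 0) W)
    {p a δ K M : ℝ} {m : ℕ} (hy : 0 ≤ y) (hp : 0 < p) (hpa : p < a) (hδ : 0 < δ)
    (hK : slope W p a ≤ K) (hgrid : ∀ i ≤ m + 1, W (a + i * δ) - (a + i * δ) * y ≤ M)
    (htail : slope W (a + m * δ) (a + (m + 1 : ℕ) * δ) ≤ y) {x : ℝ} (hx : 0 < x) :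
    W x - x * y ≤ M + K * δ + a * y := by
  have ha : 0 < a := hp.trans hpa
  have hK₀ : 0 ≤ K := (hmono.slope_nonneg hp ha).trans hK
  have hKδ : 0 ≤ K * δ := mul_nonneg hK₀ hδ.le
  have hgrid₀ : W a - a * y ≤ M := by simpa using hgrid 0 (Nat.zero_le _)
  rcases le_or_gt x a with hxa | hax
  · nlinarith [hmono hx ha hxa]
  rcases lt_or_ge x (a + (m + 1 : ℕ) * δ) with hxB | hBx
  · obtain ⟨i, him, hix, hxi⟩ := exists_nat_le_lt_add_of_lt hδ hax.le hxB
    have hinc := hconc.sub_le_slope_mul hp hx hpa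
      (le_add_of_nonneg_right (by positivity : (0 : ℝ) ≤ i * δ)) hix
    have hslope := mul_le_mul hK (by linarith : x - (a + i * δ) ≤ δ) (by linarith) hK₀
    nlinarith [hgrid i (him.trans (Nat.le_succ m))]
  · have hm : a + m * δ < a + (m + 1 : ℕ) * δ := by push_cast; linarith
    have := hconc.sub_mul_le_of_slope_le (show 0 < a + m * δ by positivity) hx hm hBx htail
    nlinarith [hgrid (m + 1) le_rfl]

theorem eventually_sub_mul_le_conjFn_add {ι : Type*} {l : Filter ι} {F : ι → ℝ → ℝ}
    {f : ℝ → ℝ} (hf : IsUtility f) (hmono : ∀ n, MonotoneOn (F n) (Ioi 0))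
    (hconc : ∀ n, ConcaveOn ℝ (Ioi 0) (F n)) (hconv : ∀ x > 0, Tendsto (F · x) l (𝓝 (f x)))
    (hy : 0 < y) {ε : ℝ} (hε : 0 < ε) :
    ∀ᶠ n in l, ∀ x > 0, F n x - x * y ≤ conjFn f y + ε := by
  set a := ε / (3 * y)
  have ha : 0 < a := by positivity
  set K := slope f (a / 2) a + 1
  have hK : 0 < K := by
    have := hf.strictMono.monotoneOn.slope_nonneg (half_pos ha) ha; linarith
  set δ := ε / (3 * K)
  have hδ : 0 < δ := by positivity
  have hgrid_pos : ∀ i : ℕ, 0 < a + i * δ := fun i => by positivity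
  obtain ⟨m, -, hm⟩ := (tendsto_atTop_add_const_left _ a
    (tendsto_natCast_atTop_atTop.atTop_mul_const hδ) |>.eventually
      (hf.eventually_slope_lt hy)).exists
  have hgrid : ∀ᶠ n in l, ∀ i ∈ Finset.Iic (m + 1),
      F n (a + i * δ) - (a + i * δ) * y < conjFn f y + ε / 3 := by
    refine (eventually_all_finset _).2 fun i _ =>
      ((hconv _ (hgrid_pos i)).sub_const _).eventually_lt_const ?_
    have : f (a + i * δ) - (a + i * δ) * y ≤ conjFn f y :=
      le_ciSup (hf.bddAbove_range_sub_mul hy) ⟨_, hgrid_pos i⟩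
    linarith
  have hK_ev : ∀ᶠ n in l, slope (F n) (a / 2) a < K :=
    ((hconv _ (half_pos ha)).slope (hconv a ha)).eventually_lt_const (lt_add_one _)
  have htail : ∀ᶠ n in l, slope (F n) (a + m * δ) (a + (m + 1 : ℕ) * δ) < y :=
    ((hconv _ (hgrid_pos m)).slope (hconv _ (hgrid_pos _))).eventually_lt_const
      (hm _ (by push_cast; linarith))
  filter_upwards [hgrid, hK_ev, htail] with n hgrid hK_n htail x hx
  calc F n x - x * y ≤ conjFn f y + ε / 3 + K * δ + a * y :=
        sub_mul_le_of_grid (hmono n) (hconc n) hy.le (half_pos ha) (half_lt_self ha) hδ hK_n.le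
          (fun i hi => (hgrid i (Finset.mem_Iic.2 hi)).le) htail.le hx
    _ = conjFn f y + ε := by simp only [a, δ]; field_simp; ring

theorem eventually_lt_conjFn {ι : Type*} {l : Filter ι} {F : ι → ℝ → ℝ} {f : ℝ → ℝ} {c : ℝ}
    (hconv : ∀ x > 0, Tendsto (F · x) l (𝓝 (f x)))
    (hbdd : ∀ᶠ n in l, BddAbove (range fun x : Ioi (0 : ℝ) => F n x - x * y))
    (hc : c < conjFn f y) : ∀ᶠ n in l, c < conjFn (F n) y := by
  obtain ⟨x, hx⟩ := exists_lt_of_lt_ciSup hc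
  filter_upwards [((hconv x x.2).sub_const _).eventually_const_lt hx, hbdd] with n hn hbdd_n
  exact hn.trans_le (le_ciSup hbdd_n x)

/-- **Pointwise convergence of conjugates**: if the utility functions `Uₙ` converge
pointwise on `(0,∞)` to the utility function `U`, then the Legendre--Fenchel conjugates
converge pointwise: `Vₙ(y) → V(y)` for every `y > 0`. -/
theorem conjFn_pointwise_convergence
    (U : ℝ → ℝ) (Un : ℕ → ℝ → ℝ) (hU : IsUtility U) (hUn : ∀ n, IsUtility (Un n))
    (hUconv : ∀ z > (0 : ℝ), Tendsto (fun n => Un n z) atTop (𝓝 (U z))) :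
    ∀ y > (0 : ℝ), Tendsto (fun n => conjFn (Un n) y) atTop (𝓝 (conjFn U y)) := by
  intro y hy
  have hupper {ε : ℝ} (hε : 0 < ε) := eventually_sub_mul_le_conjFn_add hU
    (fun n => (hUn n).strictMono.monotoneOn) (fun n => (hUn n).strictConcave.concaveOn)
    hUconv hy hε
  refine tendsto_order.2 ⟨fun c hc => ?_, fun c hc => ?_⟩
  · exact eventually_lt_conjFn hUconv ((hupper one_pos).mono fun n => bddAbove_range_sub_mul) hc
  · filter_upwards [hupper (half_pos (sub_pos.2 hc))] with n hn
    exact (conjFn_le hn).trans_lt (by linarith)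

end TC
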